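/- Let ζ ∈ V_{*,≤ℓ*(ℓ*−1)+1} with H(ζ) = Γ*, and let O(ζ) be the set of optimal paths from □ to ⊞ that visit ζ. If every path in O(ζ) visits g({□}, V_{*,ℓ*(ℓ*−1)+1}^min) after visiting ζ, then ζ is unessential. -/

import Mathlib

noncomputable section

namespace TwoTypeKawasaki

/-- Lattice sites of `ℤ²`. -/
abbrev Site := ℤ × ℤ

/-- Nearest-neighbour adjacency in `ℤ²`. -/
def Adj (x y : Site) : Prop := |x.1 - y.1| + |x.2 - y.2| = 1

/-- The box `Λ`: an `(L+3/2) × (L+3/2)` square in dual coordinates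
(`u₁ = (x₁-x₂)/2`, `u₂ = (x₁+x₂)/2`), i.e. a rhombus in standard coordinates. -/
def inLam (L : ℕ) (x : Site) : Prop :=
  -((L : ℤ) + 1) ≤ x.1 - x.2 ∧ x.1 - x.2 ≤ (L : ℤ) + 2 ∧
    -((L : ℤ) + 1) ≤ x.1 + x.2 ∧ x.1 + x.2 ≤ (L : ℤ) + 2

/-- `Λ⁻ = Λ \ ∂⁻Λ`. -/
def inLam1 (L : ℕ) (x : Site) : Prop := inLam L x ∧ ∀ y, Adj x y → inLam L y

/-- `(Λ⁻)⁻`. -/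
def inLam2 (L : ℕ) (x : Site) : Prop := inLam1 L x ∧ ∀ y, Adj x y → inLam1 L y

/-- The internal boundary `∂⁻Λ`. -/
def inBd (L : ℕ) (x : Site) : Prop := inLam L x ∧ ¬ inLam1 L x

/-- Euclidean distance `> 2` from every site of `∂⁻Λ`. -/
def FarFromBd (L : ℕ) (x : Site) : Prop :=
  ∀ z : Site, inBd L z → 4 < (x.1 - z.1) ^ 2 + (x.2 - z.2) ^ 2

/-- A configuration: `0` = empty, `1` = particle of type 1, `2` = particle of type 2;
empty outside `Λ`. -/
def Config (L : ℕ) : Type := {η : Site → Fin 3 // ∀ x, ¬ inLam L x → η x = 0}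

/-- An active bond: a nearest-neighbour pair of particles of different types, both sites
at distance at least 3 from the internal boundary. -/
def activeBond (L : ℕ) (η : Config L) (x y : Site) : Prop :=
  Adj x y ∧ FarFromBd L x ∧ FarFromBd L y ∧
    ((η.1 x = 1 ∧ η.1 y = 2) ∨ (η.1 x = 2 ∧ η.1 y = 1))

/-- Number of particles of a given type. -/
def numType (L : ℕ) (η : Config L) (v : Fin 3) : ℕ := {x : Site | η.1 x = v}.ncard

def numParticles (L : ℕ) (η : Config L) : ℕ := numType L η 1 + numType L η 2

/-- Number of ordered pairs forming an active bond (twice the number of bonds). -/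
def numBondPairs (L : ℕ) (η : Config L) : ℕ :=
  {q : Site × Site | activeBond L η q.1 q.2}.ncard

/-- The Hamiltonian `H = -U·B + Δ₁·n₁ + Δ₂·n₂`. -/
def H (U Δ1 Δ2 : ℝ) (L : ℕ) (η : Config L) : ℝ :=
  -U * (numBondPairs L η : ℝ) / 2 + Δ1 * (numType L η 1 : ℝ) + Δ2 * (numType L η 2 : ℝ)

/-- An allowed move of the Kawasaki dynamics: exchange of a particle with a hole between
two neighbouring sites of `Λ`, or creation/annihilation of a particle in `∂⁻Λ`. -/
def Move (L : ℕ) (η η' : Config L) : Prop :=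
  (∃ x y : Site, Adj x y ∧ inLam L x ∧ inLam L y ∧
      ((η.1 x = 0 ∧ η.1 y ≠ 0) ∨ (η.1 x ≠ 0 ∧ η.1 y = 0)) ∧
      η'.1 x = η.1 y ∧ η'.1 y = η.1 x ∧ ∀ z, z ≠ x → z ≠ y → η'.1 z = η.1 z) ∨
  (∃ x : Site, inBd L x ∧
      ((η.1 x = 0 ∧ η'.1 x ≠ 0) ∨ (η.1 x ≠ 0 ∧ η'.1 x = 0)) ∧
      ∀ z, z ≠ x → η'.1 z = η.1 z)

/-- A path of allowed moves from `η` to `η'`. -/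
def IsPath (L : ℕ) (ω : List (Config L)) (η η' : Config L) : Prop :=
  ω ≠ [] ∧ ω.head? = some η ∧ ω.getLast? = some η' ∧ ω.Chain' (Move L)

/-- Maximal energy along a path. -/
def maxH (U Δ1 Δ2 : ℝ) (L : ℕ) (ω : List (Config L)) : ℝ :=
  WithBot.unbotD 0 ((ω.map (H U Δ1 Δ2 L)).maximum)

/-- Communication height between two sets of configurations. -/
def PhiSet (U Δ1 Δ2 : ℝ) (L : ℕ) (A B : Set (Config L)) : ℝ :=
  sInf {m : ℝ | ∃ η ∈ A, ∃ η' ∈ B, ∃ ω, IsPath L ω η η' ∧ maxH U Δ1 Δ2 L ω = m}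

/-- Communication height between two configurations. -/
def Phi (U Δ1 Δ2 : ℝ) (L : ℕ) (η η' : Config L) : ℝ := PhiSet U Δ1 Δ2 L {η} {η'}

/-- The empty configuration `□`. -/
def emptyConfig (L : ℕ) : Config L := ⟨fun _ => 0, fun _ _ => rfl⟩

/-- A particle of type 2 with four active bonds. -/
def Saturated (L : ℕ) (η : Config L) (x : Site) : Prop :=
  η.1 x = 2 ∧ ∀ y, Adj x y → activeBond L η x y

/-- A 2-tiled configuration: every particle of type 2 is saturated and there are no
non-interacting particles of type 1. -/
def Tiled (L : ℕ) (η : Config L) : Prop :=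
  (∀ x, η.1 x = 2 → Saturated L η x) ∧ (∀ x, η.1 x = 1 → ∃ y, activeBond L η x y)

/-- `⊞`: the configurations in which `Λ` carries the largest possible checkerboard
droplet with every particle of type 2 surrounded by particles of type 1. -/
def BoxPlus (L : ℕ) : Set (Config L) :=
  {η | Tiled L η ∧ ∀ η' : Config L, Tiled L η' → numType L η' 2 ≤ numType L η 2}

/-- `Γ* = Φ(□, ⊞)`. -/
def Gamma (U Δ1 Δ2 : ℝ) (L : ℕ) : ℝ := PhiSet U Δ1 Δ2 L {emptyConfig L} (BoxPlus L)

/-- An optimal path from `□` to `⊞`: one realizing the minimax `Γ*`. -/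
def OptPath (U Δ1 Δ2 : ℝ) (L : ℕ) (ω : List (Config L)) : Prop :=
  ∃ b ∈ BoxPlus L, IsPath L ω (emptyConfig L) b ∧ maxH U Δ1 Δ2 L ω = Gamma U Δ1 Δ2 L

/-- A saddle: a configuration at energy `Γ*` on some optimal path. -/
def Saddle (U Δ1 Δ2 : ℝ) (L : ℕ) (ζ : Config L) : Prop :=
  H U Δ1 Δ2 L ζ = Gamma U Δ1 Δ2 L ∧ ∃ ω, OptPath U Δ1 Δ2 L ω ∧ ζ ∈ ω

/-- A gate: a set of saddles met by every optimal path. -/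
def IsGate (U Δ1 Δ2 : ℝ) (L : ℕ) (W : Set (Config L)) : Prop :=
  (∀ ζ ∈ W, Saddle U Δ1 Δ2 L ζ) ∧ ∀ ω, OptPath U Δ1 Δ2 L ω → ∃ ζ ∈ W, ζ ∈ ω

/-- A minimal gate: a gate such that every proper subset is avoided by some optimal path. -/
def IsMinGate (U Δ1 Δ2 : ℝ) (L : ℕ) (W : Set (Config L)) : Prop :=
  IsGate U Δ1 Δ2 L W ∧
    ∀ W' : Set (Config L), W' ⊂ W → ∃ ω, OptPath U Δ1 Δ2 L ω ∧ ∀ ζ ∈ W', ζ ∉ ω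

/-- The essential gate `G(□,⊞)`: the union of all minimal gates. -/
def EssGate (U Δ1 Δ2 : ℝ) (L : ℕ) : Set (Config L) :=
  {ζ | ∃ W, IsMinGate U Δ1 Δ2 L W ∧ ζ ∈ W}

/-- `η` is the first configuration of the path `ω` lying in `Y`. -/
def FirstIn {C : Type*} (ω : List C) (Y : Set C) (η : C) : Prop :=
  ∃ (i : ℕ) (h : i < ω.length), ω.get ⟨i, h⟩ = η ∧ η ∈ Y ∧
    ∀ (j : ℕ) (hj : j < i), ω.get ⟨j, hj.trans h⟩ ∉ Y

/-- `η` is the configuration of `ω` visited just prior to the first entrance of `Y`. -/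
def PrevFirstIn {C : Type*} (ω : List C) (Y : Set C) (η : C) : Prop :=
  ∃ (i : ℕ) (h : i + 1 < ω.length), ω.get ⟨i, Nat.lt_of_succ_lt h⟩ = η ∧
    ω.get ⟨i + 1, h⟩ ∈ Y ∧
    ∀ (j : ℕ) (hj : j < i + 1), ω.get ⟨j, lt_trans hj h⟩ ∉ Y

/-- `ω` enters the set `Y` via the configuration `η` (at some entrance: `η ∈ Y` and the
configuration visited just before, if any, is not in `Y`). -/
def EntryAt {C : Type*} (ω : List C) (Y : Set C) (η : C) : Prop :=
  ∃ (i : ℕ) (h : i < ω.length), ω.get ⟨i, h⟩ = η ∧ η ∈ Y ∧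
    ∀ (j : ℕ) (hj : j + 1 = i), ω.get ⟨j, by omega⟩ ∉ Y

/-- `C_bd`: the minimal set of configurations in the essential gate through which all
optimal paths first enter the essential gate (= the set of first entrances). -/
def Cbd (U Δ1 Δ2 : ℝ) (L : ℕ) : Set (Config L) :=
  {η | ∃ ω, OptPath U Δ1 Δ2 L ω ∧ FirstIn ω (EssGate U Δ1 Δ2 L) η}

/-- `P`: the protocritical droplets, i.e. configurations visited by optimal paths just
prior to their first entrance of the essential gate. -/
def Pset (U Δ1 Δ2 : ℝ) (L : ℕ) : Set (Config L) :=
  {η | ∃ ω, OptPath U Δ1 Δ2 L ω ∧ PrevFirstIn ω (EssGate U Δ1 Δ2 L) η}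

open Classical in
/-- Change the value of a configuration at a site of `Λ`. -/
def setSite (L : ℕ) (η : Config L) (x : Site) (v : Fin 3) : Config L :=
  if hx : inLam L x then
    ⟨Function.update η.1 x v, fun z hz => by
      have hzx : z ≠ x := fun h => hz (h ▸ hx)
      simpa [Function.update_apply, hzx] using η.2 z hz⟩
  else η

/-- `D^{bd2}`: configurations obtained from a configuration in `D` by adding one particle
of type 2 at a site of `∂⁻Λ`. -/
def bd2 (L : ℕ) (D : Set (Config L)) : Set (Config L) :=
  {η' | ∃ η ∈ D, ∃ x : Site, inBd L x ∧ η.1 x = 0 ∧ η' = setSite L η x 2}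

/-- Number of particles of type 2 in `(Λ⁻)⁻`. -/
def n2in (L : ℕ) (η : Config L) : ℕ := {x : Site | inLam2 L x ∧ η.1 x = 2}.ncard

/-- The manifold `V_{*,n}`. -/
def Vman (L : ℕ) (n : ℕ) : Set (Config L) := {η | n2in L η = n}

/-- The configurations of minimal energy in `V_{*,n}`. -/
def VmanMin (U Δ1 Δ2 : ℝ) (L : ℕ) (n : ℕ) : Set (Config L) :=
  {η | η ∈ Vman L n ∧ ∀ η' ∈ Vman L n, H U Δ1 Δ2 L η ≤ H U Δ1 Δ2 L η'}

/-- `g(A,B)`. -/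
def gset (U Δ1 Δ2 : ℝ) (L : ℕ) (A B : Set (Config L)) : Set (Config L) :=
  {η | η ∈ B ∧ ∃ ζ ∈ A, ∃ ω, IsPath L ω ζ η ∧ ∀ ξ ∈ ω,
    numType L η 2 ≤ numType L ξ 2 ∧ numType L ξ 2 ≤ numType L ζ 2 ∧
      H U Δ1 Δ2 L ξ < Gamma U Δ1 Δ2 L}

/-- `ḡ(A,B)`. -/
def gbar (U Δ1 Δ2 : ℝ) (L : ℕ) (A B : Set (Config L)) : Set (Config L) :=
  {η | η ∈ B ∧ ∃ ζ ∈ A, ∃ ω, IsPath L ω ζ η ∧ ∀ ξ ∈ ω,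
    numType L η 2 ≤ numType L ξ 2 ∧ numType L ξ 2 ≤ numType L ζ 2 ∧
      H U Δ1 Δ2 L ξ ≤ Gamma U Δ1 Δ2 L}

/-- `ℓ* = ⌈Δ₁/ε⌉` with `ε = 4U - Δ₁ - Δ₂`. -/
def lstar (U Δ1 Δ2 : ℝ) : ℕ := ⌈Δ1 / (4 * U - Δ1 - Δ2)⌉₊

/-- Adjacency of dual unit squares (of 2-tiles). -/
def dualAdj (x y : Site) : Prop := |x.1 - y.1| = 1 ∧ |x.2 - y.2| = 1

/-- The standard-coordinate positions of the particles of type 2 of an `a × b` rectangle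
of 2-tiles in dual coordinates, with corner tile centred at `c`. -/
def dualRect (c : Site) (a b : ℕ) : Set Site :=
  {x | ∃ i j : ℕ, i < a ∧ j < b ∧ x = (c.1 + (i : ℤ) + (j : ℤ), c.2 - (i : ℤ) + (j : ℤ))}

/-- The set of positions of particles of type 2. -/
def set2 (L : ℕ) (η : Config L) : Set Site := {x | η.1 x = 2}

/-- The tile support `[η]`: the union of the tiles of the particles of type 2. -/
def tileSupp (L : ℕ) (η : Config L) : Set Site :=
  {y | ∃ x : Site, η.1 x = 2 ∧ (y = x ∨ Adj x y)}

/-- Dual perimeter of a set of 2-tile positions (total boundary length of the union of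
the corresponding dual unit squares). -/
def dualPerim (S : Set Site) : ℤ :=
  4 * (S.ncard : ℤ) - ({q : Site × Site | q.1 ∈ S ∧ q.2 ∈ S ∧ dualAdj q.1 q.2}.ncard : ℤ)

/-- The circumscribing dual rectangle (side lengths `a`, `b`, corner tile at `c`). -/
def CircumRect (S : Set Site) (c : Site) (a b : ℕ) : Prop :=
  S ⊆ dualRect c a b ∧
    (∃ x ∈ S, x.1 - x.2 = c.1 - c.2) ∧
    (∃ x ∈ S, x.1 - x.2 = c.1 - c.2 + 2 * ((a : ℤ) - 1)) ∧
    (∃ x ∈ S, x.1 + x.2 = c.1 + c.2) ∧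
    (∃ x ∈ S, x.1 + x.2 = c.1 + c.2 + 2 * ((b : ℤ) - 1))

/-- Connectedness of a set of dual unit squares. -/
def DualConnected (S : Set Site) : Prop :=
  ∀ x ∈ S, ∀ y ∈ S, ∃ (n : ℕ) (f : ℕ → Site),
    f 0 = x ∧ f n = y ∧ (∀ k, k ≤ n → f k ∈ S) ∧ ∀ k, k < n → dualAdj (f k) (f (k + 1))

/-- A monotone polyomino with circumscribing rectangle of side lengths `a`, `b`:
its dual perimeter equals the perimeter `2(a+b)` of the circumscribing rectangle. -/
def MonotonePolyWith (S : Set Site) (a b : ℕ) : Prop :=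
  S.Nonempty ∧ DualConnected S ∧
    ∃ c : Site, CircumRect S c a b ∧ dualPerim S = 2 * ((a : ℤ) + (b : ℤ))

/-- `D_A`: 2-tiled configurations with `ℓ*(ℓ*-1)+1` particles of type 2 whose dual tile
support is an `ℓ* × (ℓ*-1)` rectangle plus a protuberance on one of its four sides. -/
def DA (U Δ1 Δ2 : ℝ) (L : ℕ) : Set (Config L) :=
  {η | Tiled L η ∧
    numType L η 2 = lstar U Δ1 Δ2 * (lstar U Δ1 Δ2 - 1) + 1 ∧
    ∃ (c p : Site) (a b : ℕ),
      ((a = lstar U Δ1 Δ2 ∧ b = lstar U Δ1 Δ2 - 1) ∨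
        (a = lstar U Δ1 Δ2 - 1 ∧ b = lstar U Δ1 Δ2)) ∧
      p ∉ dualRect c a b ∧ (∃ q ∈ dualRect c a b, dualAdj q p) ∧
      set2 L η = dualRect c a b ∪ {p}}

/-- `D_B`: 2-tiled configurations with `ℓ*(ℓ*-1)+1` particles of type 2 whose dual tile
support is a monotone polyomino with circumscribing rectangle of side lengths
`ℓ*,ℓ*` or `ℓ*+1,ℓ*-1`. -/
def DB (U Δ1 Δ2 : ℝ) (L : ℕ) : Set (Config L) :=
  {η | Tiled L η ∧
    numType L η 2 = lstar U Δ1 Δ2 * (lstar U Δ1 Δ2 - 1) + 1 ∧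
    (MonotonePolyWith (set2 L η) (lstar U Δ1 Δ2) (lstar U Δ1 Δ2) ∨
      MonotonePolyWith (set2 L η) (lstar U Δ1 Δ2 + 1) (lstar U Δ1 Δ2 - 1) ∨
      MonotonePolyWith (set2 L η) (lstar U Δ1 Δ2 - 1) (lstar U Δ1 Δ2 + 1))}

/-- `D_C`: 2-tiled configurations with `ℓ*(ℓ*-1)+1` particles of type 2 whose dual tile
support is a monotone polyomino whose circumscribing rectangle has perimeter `4ℓ*`. -/
def DC (U Δ1 Δ2 : ℝ) (L : ℕ) : Set (Config L) :=
  {η | Tiled L η ∧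
    numType L η 2 = lstar U Δ1 Δ2 * (lstar U Δ1 Δ2 - 1) + 1 ∧
    ∃ a b : ℕ, a + b = 2 * lstar U Δ1 Δ2 ∧ MonotonePolyWith (set2 L η) a b}

/-- Two configurations agree modulo a translation. -/
def TransEq (L : ℕ) (η η' : Config L) : Prop :=
  ∃ v : Site, ∀ x : Site, η'.1 x = η.1 (x.1 - v.1, x.2 - v.2)

/-- `N*`: the cardinality of the set of protocritical droplets modulo translations. -/
def Nstar (U Δ1 Δ2 : ℝ) (L : ℕ) : ℕ :=
  Nat.card (Quot fun a b : {η : Config L // η ∈ Pset U Δ1 Δ2 L} => TransEq L a.1 b.1)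

/-- A corner particle of type 1: a particle of type 1 with exactly one active bond. -/
def CornerP1 (L : ℕ) (η : Config L) (x : Site) : Prop :=
  η.1 x = 1 ∧ {y : Site | activeBond L η x y}.ncard = 1

/-- A standard configuration with `ℓ*(ℓ*-1)` particles of type 2: a 2-tiled configuration
whose dual tile support is an `ℓ* × (ℓ*-1)` rectangle. -/
def StdRectConfig (U Δ1 Δ2 : ℝ) (L : ℕ) (ρ : Config L) : Prop :=
  Tiled L ρ ∧ numType L ρ 2 = lstar U Δ1 Δ2 * (lstar U Δ1 Δ2 - 1) ∧
    ∃ c : Site, set2 L ρ = dualRect c (lstar U Δ1 Δ2) (lstar U Δ1 Δ2 - 1) ∨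
      set2 L ρ = dualRect c (lstar U Δ1 Δ2 - 1) (lstar U Δ1 Δ2)

/-- A bar of `l` dual squares at dual level `j = jlev`, at positions `i₀ ≤ i < i₀ + l`. -/
def dualBarJ (c : Site) (jlev : ℤ) (i0 l : ℕ) : Set Site :=
  {x | ∃ i : ℕ, i0 ≤ i ∧ i < i0 + l ∧ x = (c.1 + (i : ℤ) + jlev, c.2 - (i : ℤ) + jlev)}

/-- A bar of `l` dual squares at dual level `i = ilev`, at positions `j₀ ≤ j < j₀ + l`. -/
def dualBarI (c : Site) (ilev : ℤ) (j0 l : ℕ) : Set Site :=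
  {x | ∃ j : ℕ, j0 ≤ j ∧ j < j0 + l ∧ x = (c.1 + ilev + (j : ℤ), c.2 - ilev + (j : ℤ))}

/-- A standard polyomino: a quasi-square with possibly a bar attached to one of its
longest sides. -/
def StdPoly (S : Set Site) : Prop :=
  ∃ (c : Site) (a b : ℕ), 0 < a ∧ 0 < b ∧ (a = b ∨ a = b + 1 ∨ b = a + 1) ∧
    (S = dualRect c a b ∨
      ∃ k0 l : ℕ, 0 < l ∧
        ((b ≤ a ∧ k0 + l ≤ a ∧
            (S = dualRect c a b ∪ dualBarJ c (b : ℤ) k0 l ∨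
              S = dualRect c a b ∪ dualBarJ c (-1) k0 l)) ∨
          (a ≤ b ∧ k0 + l ≤ b ∧
            (S = dualRect c a b ∪ dualBarI c (a : ℤ) k0 l ∨
              S = dualRect c a b ∪ dualBarI c (-1) k0 l))))

/-- A standard configuration: a 2-tiled configuration whose dual tile support is a
standard polyomino. -/
def StdConfig (L : ℕ) (η : Config L) : Prop := Tiled L η ∧ StdPoly (set2 L η)

/-- A quasi-standard configuration: obtained from a standard configuration by removing
some (possibly none) of its corner particles of type 1. -/
def QuasiStd (L : ℕ) (η : Config L) : Prop :=
  ∃ ρ : Config L, StdConfig L ρ ∧ ∃ S : Set Site, (∀ x ∈ S, CornerP1 L ρ x) ∧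
    ∀ x : Site, (x ∈ S → η.1 x = 0) ∧ (x ∉ S → η.1 x = ρ.1 x)

/-- The surface `F(η)`. -/
def surface (L : ℕ) (η : Config L) : Set Site :=
  {x | inLam L x ∧ ∃ y, Adj x y ∧ η.1 y = 1}

/-- A good dual corner: an empty site with three neighbouring sites occupied by
particles of type 1. -/
def GoodDualCorner (L : ℕ) (η : Config L) (w : Site) : Prop :=
  η.1 w = 0 ∧ {y : Site | Adj w y ∧ η.1 y = 1}.ncard = 3

/-- Connectedness of two occupied sites through active bonds (same cluster). -/
def BondConn (L : ℕ) (η : Config L) (x y : Site) : Prop :=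
  ∃ (n : ℕ) (f : ℕ → Site), f 0 = x ∧ f n = y ∧ (∀ k, k ≤ n → η.1 (f k) ≠ 0) ∧
    ∀ k, k < n → activeBond L η (f k) (f (k + 1))

/-- A configuration consisting of a single droplet (one cluster). -/
def SingleDroplet (L : ℕ) (η : Config L) : Prop :=
  (∃ x, η.1 x ≠ 0) ∧ ∀ x y, η.1 x ≠ 0 → η.1 y ≠ 0 → BondConn L η x y

/-- The number of droplets (clusters) of a configuration. -/
def nDroplets (L : ℕ) (η : Config L) : ℕ :=
  Nat.card (Quot fun a b : {x : Site // η.1 x ≠ 0} => BondConn L η a.1 b.1)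

/-- A site with a lattice path of empty sites to `∂⁻Λ`. -/
def LatticeConnecting (L : ℕ) (η : Config L) (i : Site) : Prop :=
  ∃ (n : ℕ) (f : ℕ → Site), f 0 = i ∧ inBd L (f n) ∧
    (∀ k, k ≤ n → inLam L (f k)) ∧ (∀ k, k < n → Adj (f k) (f (k + 1))) ∧
    ∀ k, 0 < k → k ≤ n → η.1 (f k) = 0

/-- A path of empty sites of `Λ` for the free particle, starting in `∂⁻Λ`. -/
def FreePath (L : ℕ) (η₀ : Config L) (m : ℕ) (z : ℕ → Site) : Prop :=
  inBd L (z 0) ∧ (∀ k, k ≤ m → inLam L (z k) ∧ η₀.1 (z k) = 0) ∧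
    ∀ k, k < m → Adj (z k) (z (k + 1))

/-- The free particle of type 2 placed at `w` is attached to the droplet `η₀`
(it has at least one active bond). -/
def AttachedAt (L : ℕ) (η₀ : Config L) (w : Site) : Prop :=
  ∃ y, activeBond L (setSite L η₀ w 2) w y

/-- `C*_att(η₀)`: configurations obtained from `C_bd` by moving the free particle of
type 2 along a path of empty sites of `Λ` and attaching it to the droplet `η₀`. -/
def CstarAtt (U Δ1 Δ2 : ℝ) (L : ℕ) (η₀ : Config L) : Set (Config L) :=
  {η | ∃ (m : ℕ) (z : ℕ → Site), FreePath L η₀ m z ∧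
      setSite L η₀ (z 0) 2 ∈ Cbd U Δ1 Δ2 L ∧
      (∀ k, k < m → ¬ AttachedAt L η₀ (z k)) ∧ AttachedAt L η₀ (z m) ∧
      η = setSite L η₀ (z m) 2}

/-- `C*`: configurations obtained from `C_bd` by moving the free particle of type 2
along a path of empty sites of `Λ` without ever attaching it to the droplet. -/
def Cstar (U Δ1 Δ2 : ℝ) (L : ℕ) : Set (Config L) :=
  {η | ∃ η₀ ∈ Pset U Δ1 Δ2 L, ∃ (m : ℕ) (z : ℕ → Site), FreePath L η₀ m z ∧
      setSite L η₀ (z 0) 2 ∈ Cbd U Δ1 Δ2 L ∧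
      (∀ k, k ≤ m → ¬ AttachedAt L η₀ (z k)) ∧
      η = setSite L η₀ (z m) 2}

/-- Membership of an `m × m` square of sites with lower-left corner `c`. -/
def inSquare (c : Site) (m : ℕ) (x : Site) : Prop :=
  c.1 ≤ x.1 ∧ x.1 < c.1 + (m : ℤ) ∧ c.2 ≤ x.2 ∧ x.2 < c.2 + (m : ℤ)

/-- The move of a particle of type 2 from `x` to the neighbouring empty site `y`. -/
def Move2 (L : ℕ) (ξ ξ' : Config L) (x y : Site) : Prop :=
  Adj x y ∧ ξ.1 x = 2 ∧ ξ.1 y = 0 ∧ ξ'.1 x = 0 ∧ ξ'.1 y = 2 ∧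
    ∀ z, z ≠ x → z ≠ y → ξ'.1 z = ξ.1 z

/-- The step `ξ → ξ'` moves a corner particle of type 2 of `η` along the edge where in
`η` it shares a bond with a corner particle of type 1. -/
def CornerStep (L : ℕ) (η ξ ξ' : Config L) : Prop :=
  ∃ x y q : Site, Move2 L ξ ξ' x y ∧ η.1 x = 2 ∧ CornerP1 L η q ∧
    activeBond L η x q ∧
    (y.1 - x.1) * (q.1 - x.1) + (y.2 - x.2) * (q.2 - x.2) = 0

/-- `S(ω)`: the set of maximal-energy configurations of a path. -/
def argmaxSet (U Δ1 Δ2 : ℝ) (L : ℕ) (ω : List (Config L)) : Set (Config L) :=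
  {ξ | ξ ∈ ω ∧ H U Δ1 Δ2 L ξ = maxH U Δ1 Δ2 L ω}

/-- An unessential saddle. -/
def Unessential (U Δ1 Δ2 : ℝ) (L : ℕ) (ζ : Config L) : Prop :=
  ∀ ω, OptPath U Δ1 Δ2 L ω → ζ ∈ ω →
    (argmaxSet U Δ1 Δ2 L ω \ {ζ}).Nonempty ∧
    ∃ ω', OptPath U Δ1 Δ2 L ω' ∧
      argmaxSet U Δ1 Δ2 L ω' ⊆ argmaxSet U Δ1 Δ2 L ω \ {ζ}

/-! Coefficients of the generating functions of Kurz counting polyominoes of minimal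
perimeter: `a(x) = ∏_{j≥1} (1-x^j)^{-1}` (partitions), `s(x) = 1 + ∑_{k≥1} x^{k²}
∏_{j=1}^k (1-x^{2j})^{-1}`, `r(x) = (a(x)⁴ + 3a(x²)²)/4`,
`q(x) = (a(x)⁴ + 3a(x²)² + 2s(x)²a(x²) + 2a(x⁴))/8`. -/

/-- Coefficients of `a(x)`: the number of partitions of `n`. -/
def partCount (n : ℕ) : ℕ := Nat.card (Nat.Partition n)

/-- The number of partitions of `n` into parts of size at most `k`. -/
def partCountLe (k n : ℕ) : ℕ :=
  Nat.card {π : Nat.Partition n // ∀ i ∈ π.parts, i ≤ k}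

/-- Coefficients of `a(x)⁴`. -/
def aPow4Coeff (n : ℕ) : ℕ :=
  ∑ i ∈ Finset.range (n + 1), ∑ j ∈ Finset.range (n + 1 - i),
    ∑ k ∈ Finset.range (n + 1 - i - j),
      partCount i * partCount j * partCount k * partCount (n - i - j - k)

/-- Coefficients of `a(x²)`. -/
def aX2Coeff (n : ℕ) : ℕ := if 2 ∣ n then partCount (n / 2) else 0

/-- Coefficients of `a(x²)²`. -/
def aSqX2Coeff (n : ℕ) : ℕ :=
  if 2 ∣ n then ∑ i ∈ Finset.range (n / 2 + 1), partCount i * partCount (n / 2 - i) else 0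

/-- Coefficients of `a(x⁴)`. -/
def aX4Coeff (n : ℕ) : ℕ := if 4 ∣ n then partCount (n / 4) else 0

/-- Coefficients of `s(x)`: the coefficient of `xⁿ` in `x^{k²} ∏_{j=1}^k (1-x^{2j})^{-1}`
is the number of partitions of `(n-k²)/2` into parts at most `k` (when `n-k²` is even
and nonnegative). -/
def sCoeff (n : ℕ) : ℕ :=
  (if n = 0 then 1 else 0) +
    ∑ k ∈ Finset.Icc 1 n,
      if k ^ 2 ≤ n ∧ 2 ∣ (n - k ^ 2) then partCountLe k ((n - k ^ 2) / 2) else 0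

/-- Coefficients of `s(x)² a(x²)`. -/
def s2aCoeff (n : ℕ) : ℕ :=
  ∑ i ∈ Finset.range (n + 1), ∑ j ∈ Finset.range (n + 1 - i),
    sCoeff i * sCoeff j * aX2Coeff (n - i - j)

/-- `r_n`: the coefficients of `r(x) = (a(x)⁴ + 3a(x²)²)/4`. -/
def rCoeff (n : ℕ) : ℚ := ((aPow4Coeff n : ℚ) + 3 * (aSqX2Coeff n : ℚ)) / 4

/-- `q_n`: the coefficients of `q(x) = (a(x)⁴ + 3a(x²)² + 2s(x)²a(x²) + 2a(x⁴))/8`. -/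
def qCoeff (n : ℕ) : ℚ :=
  ((aPow4Coeff n : ℚ) + 3 * (aSqX2Coeff n : ℚ) + 2 * (s2aCoeff n : ℚ) +
    2 * (aX4Coeff n : ℚ)) / 8

end TwoTypeKawasaki

/-! Membership in `g({□}, V^min)` provides a path from `□` staying strictly below `Γ*`. So if an
optimal path visits such a configuration `η` after the saddle `ζ`, its initial segment up to `η`
can be replaced by that path: the result is still optimal, visits `ζ` fewer times and has no
configuration at level `Γ*` the old path did not have. Iterating removes `ζ` altogether, and the
saddles of the final path are saddles of the original one other than `ζ`. -/

theorem List.IsChain.append_drop_succ {α : Type*} {R : α → α → Prop} {ρ σ : List α} {j : ℕ}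
    (hj : j < σ.length) (hρ : ρ.IsChain R) (hσ : σ.IsChain R)
    (hlast : ρ.getLast? = some σ[j]) : (ρ ++ σ.drop (j + 1)).IsChain R := by
  refine hρ.append (hσ.drop _) fun x hx y hy => ?_
  rw [hlast, Option.mem_some_iff] at hx
  rw [List.head?_drop, Option.mem_def, List.getElem?_eq_some_iff] at hy
  obtain ⟨hj1, rfl⟩ := hy
  exact hx ▸ List.isChain_iff_getElem.1 hσ j hj1

theorem List.getLast?_append_drop_succ {α : Type*} {ρ σ : List α} {j : ℕ} (hj : j < σ.length)
    (hlast : ρ.getLast? = some σ[j]) : (ρ ++ σ.drop (j + 1)).getLast? = σ.getLast? := by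
  rw [List.getLast?_append, List.getLast?_drop, List.getLast?_eq_getElem?,
    List.getElem?_eq_getElem (by omega)]
  split_ifs with hlen
  · rw [Option.none_or, hlast]
    congr 2
    omega
  · rfl

theorem List.count_drop_succ_lt {α : Type*} [BEq α] [LawfulBEq α] {σ : List α} {a : α}
    {i j : ℕ} (hij : i ≤ j) (hj : j < σ.length) (ha : σ[i] = a) :
    (σ.drop (j + 1)).count a < σ.count a := by
  have ha_take : a ∈ σ.take (j + 1) := by
    rw [← ha, ← List.getElem_take (j := j + 1) (h := by simp; omega)]
    exact List.getElem_mem _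
  conv_rhs => rw [← List.take_append_drop (j + 1) σ, List.count_append]
  have := List.count_pos_iff.2 ha_take
  omega

namespace TwoTypeKawasaki

section Rerouting

variable {U Δ1 Δ2 : ℝ} {L : ℕ}

theorem maxH_eq_of_maximum_eq {ω : List (Config L)} {m : ℝ}
    (hm : (ω.map (H U Δ1 Δ2 L)).maximum = m) : maxH U Δ1 Δ2 L ω = m := by
  rw [maxH, hm, WithBot.unbotD_coe]

theorem exists_maximum_eq {ω : List (Config L)} (h : ω ≠ []) :
    ∃ m : ℝ, (ω.map (H U Δ1 Δ2 L)).maximum = m :=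
  WithBot.ne_bot_iff_exists.1 (List.maximum_ne_bot_of_ne_nil (mt List.map_eq_nil_iff.1 h))
    |>.imp fun _ => Eq.symm

theorem le_maxH_of_mem {ω : List (Config L)} {ξ : Config L} (h : ξ ∈ ω) :
    H U Δ1 Δ2 L ξ ≤ maxH U Δ1 Δ2 L ω := by
  obtain ⟨m, hm⟩ := exists_maximum_eq (U := U) (Δ1 := Δ1) (Δ2 := Δ2) (List.ne_nil_of_mem h)
  rw [maxH_eq_of_maximum_eq hm]
  exact List.le_maximum_of_mem (List.mem_map_of_mem h) hm

theorem exists_mem_eq_maxH {ω : List (Config L)} (h : ω ≠ []) :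
    ∃ ξ ∈ ω, H U Δ1 Δ2 L ξ = maxH U Δ1 Δ2 L ω := by
  obtain ⟨m, hm⟩ := exists_maximum_eq (U := U) (Δ1 := Δ1) (Δ2 := Δ2) h
  obtain ⟨ξ, hξ, hξm⟩ := List.mem_map.1 (List.maximum_mem hm)
  exact ⟨ξ, hξ, hξm ▸ (maxH_eq_of_maximum_eq hm).symm⟩

theorem maxH_le {ω : List (Config L)} {c : ℝ} (h : ω ≠ []) (hc : ∀ ξ ∈ ω, H U Δ1 Δ2 L ξ ≤ c) :
    maxH U Δ1 Δ2 L ω ≤ c := by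
  obtain ⟨ξ, hξ, hξmax⟩ := exists_mem_eq_maxH (U := U) (Δ1 := Δ1) (Δ2 := Δ2) h
  exact hξmax ▸ hc ξ hξ

variable (U Δ1 Δ2 L) in
theorem H_emptyConfig : H U Δ1 Δ2 L (emptyConfig L) = 0 := by
  simp [H, numType, numBondPairs, activeBond, emptyConfig]

theorem Gamma_le_maxH {ω : List (Config L)} {b : Config L} (hb : b ∈ BoxPlus L)
    (hω : IsPath L ω (emptyConfig L) b) : Gamma U Δ1 Δ2 L ≤ maxH U Δ1 Δ2 L ω := by
  refine csInf_le ⟨0, ?_⟩ ⟨emptyConfig L, rfl, b, hb, ω, hω, rfl⟩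
  rintro m ⟨η, rfl, η', -, σ, hσ, rfl⟩
  exact H_emptyConfig U Δ1 Δ2 L ▸ le_maxH_of_mem (List.mem_of_mem_head? hσ.2.1)

theorem OptPath.mem_argmaxSet_iff {ω : List (Config L)} (hω : OptPath U Δ1 Δ2 L ω)
    {ξ : Config L} : ξ ∈ argmaxSet U Δ1 Δ2 L ω ↔ ξ ∈ ω ∧ H U Δ1 Δ2 L ξ = Gamma U Δ1 Δ2 L := by
  obtain ⟨_, _, _, hmax⟩ := hω
  exact hmax ▸ Iff.rfl

theorem OptPath.argmaxSet_nonempty {ω : List (Config L)} (hω : OptPath U Δ1 Δ2 L ω) :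
    (argmaxSet U Δ1 Δ2 L ω).Nonempty := by
  obtain ⟨_, _, hpath, _⟩ := hω
  exact exists_mem_eq_maxH hpath.1

variable (U Δ1 Δ2 L) in
def ReachableBelowGamma (η : Config L) : Prop :=
  ∃ ρ, IsPath L ρ (emptyConfig L) η ∧ ∀ ξ ∈ ρ, H U Δ1 Δ2 L ξ < Gamma U Δ1 Δ2 L

theorem reachableBelowGamma_of_mem_gset {B : Set (Config L)} {η : Config L}
    (hη : η ∈ gset U Δ1 Δ2 L {emptyConfig L} B) : ReachableBelowGamma U Δ1 Δ2 L η := by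
  obtain ⟨-, _, rfl, ρ, hρ, hlow⟩ := hη
  exact ⟨ρ, hρ, fun ξ hξ => (hlow ξ hξ).2.2⟩

/-- The new initial segment cannot raise the maximum, and no path from `□` to `⊞` stays
below `Γ*`. -/
theorem OptPath.reroute {σ ρ : List (Config L)} {j : ℕ} (hσ : OptPath U Δ1 Δ2 L σ)
    (hj : j < σ.length) (hρ : IsPath L ρ (emptyConfig L) σ[j])
    (hlow : ∀ ξ ∈ ρ, H U Δ1 Δ2 L ξ < Gamma U Δ1 Δ2 L) :
    OptPath U Δ1 Δ2 L (ρ ++ σ.drop (j + 1)) := by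
  obtain ⟨b, hb, ⟨hne, hhead, hlast, hchain⟩, hmax⟩ := hσ
  obtain ⟨hρne, hρhead, hρlast, hρchain⟩ := hρ
  have hpath : IsPath L (ρ ++ σ.drop (j + 1)) (emptyConfig L) b :=
    ⟨by simp [hρne], by rw [List.head?_append_of_ne_nil _ hρne, hρhead],
      by rw [List.getLast?_append_drop_succ hj hρlast, hlast],
      List.IsChain.append_drop_succ hj hρchain hchain hρlast⟩
  refine ⟨b, hb, hpath, le_antisymm (maxH_le hpath.1 fun ξ hξ => ?_) (Gamma_le_maxH hb hpath)⟩
  rcases List.mem_append.1 hξ with hξ | hξ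
  · exact (hlow ξ hξ).le
  · exact hmax ▸ le_maxH_of_mem (List.mem_of_mem_drop hξ)

def VisitsAfter (ω : List (Config L)) (ζ : Config L) (G : Set (Config L)) : Prop :=
  ∃ (i j : ℕ) (hi : i < ω.length) (hj : j < ω.length), i < j ∧ ω[i] = ζ ∧ ω[j] ∈ G

/-- Induction on the number of visits of `ζ`, rerouting at a visit of `G` after `ζ`. -/
theorem exists_optPath_not_mem {ζ : Config L} {G : Set (Config L)}
    (hH : H U Δ1 Δ2 L ζ = Gamma U Δ1 Δ2 L) (hG : ∀ η ∈ G, ReachableBelowGamma U Δ1 Δ2 L η)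
    (hvisit : ∀ ω, OptPath U Δ1 Δ2 L ω → ζ ∈ ω → VisitsAfter ω ζ G)
    {σ : List (Config L)} (hσ : OptPath U Δ1 Δ2 L σ) :
    ∃ σ', OptPath U Δ1 Δ2 L σ' ∧ ζ ∉ σ' ∧
      ∀ ξ ∈ σ', H U Δ1 Δ2 L ξ = Gamma U Δ1 Δ2 L → ξ ∈ σ := by
  classical
  induction hcount : σ.count ζ using Nat.strong_induction_on generalizing σ with
  | _ n ih =>
  by_cases hζ : ζ ∈ σ
  swap
  · exact ⟨σ, hσ, hζ, fun ξ hξ _ => hξ⟩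
  obtain ⟨i, j, hi, hj, hij, hζi, hGj⟩ := hvisit σ hσ hζ
  obtain ⟨ρ, hρ, hlow⟩ := hG _ hGj
  have hζρ : ζ ∉ ρ := fun h => (hlow ζ h).ne hH
  have hfewer : (ρ ++ σ.drop (j + 1)).count ζ < n := by
    rw [List.count_append, List.count_eq_zero.2 hζρ, zero_add, ← hcount]
    exact List.count_drop_succ_lt hij.le hj hζi
  obtain ⟨σ', hσ', hζσ', hsub⟩ := ih _ hfewer (hσ.reroute hj hρ hlow) rfl
  refine ⟨σ', hσ', hζσ', fun ξ hξ hξH => ?_⟩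
  rcases List.mem_append.1 (hsub ξ hξ hξH) with hξρ | hξσ
  · exact absurd hξH (hlow ξ hξρ).ne
  · exact List.mem_of_mem_drop hξσ

theorem unessential_of_forall_visitsAfter {ζ : Config L} {G : Set (Config L)}
    (hH : H U Δ1 Δ2 L ζ = Gamma U Δ1 Δ2 L) (hG : ∀ η ∈ G, ReachableBelowGamma U Δ1 Δ2 L η)
    (hvisit : ∀ ω, OptPath U Δ1 Δ2 L ω → ζ ∈ ω → VisitsAfter ω ζ G) :
    Unessential U Δ1 Δ2 L ζ := by
  intro ω hω _
  obtain ⟨σ, hσ, hζσ, hsub⟩ := exists_optPath_not_mem hH hG hvisit hω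
  have hσω : argmaxSet U Δ1 Δ2 L σ ⊆ argmaxSet U Δ1 Δ2 L ω \ {ζ} := by
    intro ξ hξ
    rw [hσ.mem_argmaxSet_iff] at hξ
    exact ⟨hω.mem_argmaxSet_iff.2 ⟨hsub ξ hξ.1 hξ.2, hξ.2⟩, fun h => hζσ (h ▸ hξ.1)⟩
  exact ⟨hσ.argmaxSet_nonempty.mono hσω, σ, hσ, hσω⟩

end Rerouting

theorem unessential_when_g_visited_after_general
    (U Δ1 Δ2 : ℝ) (L : ℕ)
    (ζ : Config L)
    (hH : H U Δ1 Δ2 L ζ = Gamma U Δ1 Δ2 L)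
    (hvisit : ∀ ω : List (Config L), OptPath U Δ1 Δ2 L ω → ζ ∈ ω →
      ∃ (i j : ℕ) (hi : i < ω.length) (hj : j < ω.length), i < j ∧
        ω.get ⟨i, hi⟩ = ζ ∧
        ω.get ⟨j, hj⟩ ∈ gset U Δ1 Δ2 L {emptyConfig L} (VmanMin U Δ1 Δ2 L (lstar U Δ1 Δ2 * (lstar U Δ1 Δ2 - 1) + 1))) :
    Unessential U Δ1 Δ2 L ζ :=
  unessential_of_forall_visitsAfter hH (fun _ => reachableBelowGamma_of_mem_gset) hvisit

/-- a saddle `ζ` with at most `ℓ*(ℓ*-1)+1` particles of type 2 such that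
every optimal path through `ζ` visits `g({□},V^min)` after visiting `ζ` is unessential. -/
theorem unessential_when_g_visited_after
    (U Δ1 Δ2 : ℝ) (L : ℕ)
    (hU : 0 < U) (hΔ1 : 0 < Δ1) (hΔ2 : 0 < Δ2)
    (h1 : Δ1 < U) (h2 : 2 * U < Δ2 - Δ1) (h3 : Δ1 + Δ2 < 4 * U)
    (hnotint : ∀ n : ℕ, Δ1 / (4 * U - Δ1 - Δ2) ≠ (n : ℝ))
    (hL : 2 * lstar U Δ1 Δ2 + 2 < L)
    (ζ : Config L)
    (hn : n2in L ζ ≤ lstar U Δ1 Δ2 * (lstar U Δ1 Δ2 - 1) + 1)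
    (hH : H U Δ1 Δ2 L ζ = Gamma U Δ1 Δ2 L)
    (hvisit : ∀ ω : List (Config L), OptPath U Δ1 Δ2 L ω → ζ ∈ ω →
      ∃ (i j : ℕ) (hi : i < ω.length) (hj : j < ω.length), i < j ∧
        ω.get ⟨i, hi⟩ = ζ ∧
        ω.get ⟨j, hj⟩ ∈ gset U Δ1 Δ2 L {emptyConfig L} (VmanMin U Δ1 Δ2 L (lstar U Δ1 Δ2 * (lstar U Δ1 Δ2 - 1) + 1))) :
    Unessential U Δ1 Δ2 L ζ :=
  unessential_when_g_visited_after_general U Δ1 Δ2 L ζ hH hvisit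

end TwoTypeKawasaki
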